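/- arXiv:2005.01771 — 2 statements merged into one kernel-verified Lean document; each statement's English description precedes it below -/
import Mathlib

section
/- Fix an impulse time sequence and consider the homogeneous impulsive system ẋ(t) = Ã(t)x(t) on the flow intervals with jumps x(t_k⁺) = J̃(k)x(t_k), where Ã is continuous, bounded and Metzler-valued and J̃(k) ≥ 0 for all k ≥ 1. Let b, d ∈ ℝ^n with b > 0 and d > 0, and suppose ξ : [t_0,∞) → ℝ^n is piecewise-C¹ along the impulse sequence and satisfies ξ̄₁ ≤ ξ(t) ≤ ξ̄₂ for all t ≥ t_0 for some vectors 0 < ξ̄₁ ≤ ξ̄₂, together with −ξ̇(t) + Ã(t)ξ(t) + b < 0 at every t in the interiors of the flow intervals and J̃(k)ξ(t_k) − ξ(t_k⁺) + d < 0 for all k ≥ 1. Set α = (min_i b_i)/(max_i (ξ̄₂)_i) and ρ = 1 − (min_i d_i)/(max_i (ξ̄₂)_i). Then ρ ∈ (0,1) and every trajectory x of the homogeneous system with x(t_0) ≥ 0 satisfies ‖x(t)‖_∞ ≤ (max_i (ξ̄₂)_i / min_i (ξ̄₁)_i) · ρ^{κ(t,t_0)} · e^{−α(t−t_0)} ·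 ‖x(t_0)‖_∞ for all t ≥ t_0; consequently there exists M > 0 such that every trajectory of the homogeneous system satisfies ‖x(t)‖_∞ ≤ M ρ^{κ(t,t_0)} e^{−α(t−t_0)} ‖x(t_0)‖_∞ for all t ≥ t_0. -/
/-!
On the `k`-th flow interval the rescaled certificate `v = c ρ^k e^{-α(t - t₀)} ξ` is a strict
supersolution of `ẋ = Ã(t) x`: since `α ξ ≤ b`, the flow inequality gives `Ã ξ < ξ' - α ξ`.
Because `Ã(t)` is Metzler, at a time where `|x| ≤ v` and `±xᵢ = vᵢ` the off-diagonal terms of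
`±(Ã x)ᵢ` are dominated by those of `(Ã v)ᵢ`, so `±xᵢ - vᵢ` has negative derivative and `|x| ≤ v`
persists along the interval. At an impulse, `J̃(k) ≥ 0` and `J̃(k) ξ(t_k) < ξ(t_k⁺) - d ≤ ρ ξ(t_k⁺)`
make the bound strict for `x(t_k⁺)` with one more factor `ρ`, and the comparison restarts.
Finally `ξ̄₁ ≤ ξ ≤ ξ̄₂` converts between the `ξ`-weighted bound and the sup norm.
-/

open Matrix Filter Set Topology

/-- A square real matrix is Metzler if all its off-diagonal entries are nonnegative. -/
def Metzler {n : ℕ} (A : Matrix (Fin n) (Fin n) ℝ) : Prop :=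
  ∀ i j, i ≠ j → 0 ≤ A i j

/-- An impulse time sequence: `t 0` is the initial time `t₀`, the `t k` for `k ≥ 1` are the
impulse times; the sequence is strictly increasing and tends to infinity. -/
structure ImpulseSeq where
  t : ℕ → ℝ
  t0_nonneg : 0 ≤ t 0
  mono : StrictMono t
  tendsto_atTop : Filter.Tendsto t Filter.atTop Filter.atTop

/-- `κ(t,s)`: the number of impulse instants `t_k`, `k ≥ 1`, with `s ≤ t_k < t`. -/
noncomputable def ImpulseSeq.kappa (σ : ImpulseSeq) (s u : ℝ) : ℕ :=
  Set.ncard {k : ℕ | 1 ≤ k ∧ s ≤ σ.t k ∧ σ.t k < u}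

/-- A trajectory of the homogeneous impulsive system `ẋ = Ã(t)x`, `x(t_k⁺) = J̃(k)x(t_k)`. -/
def IsHomTrajectory {n : ℕ} (σ : ImpulseSeq)
    (At : ℝ → Matrix (Fin n) (Fin n) ℝ) (J : ℕ → Matrix (Fin n) (Fin n) ℝ)
    (x : ℝ → Fin n → ℝ) : Prop :=
  (∀ k, ContinuousOn x (Set.Ioc (σ.t k) (σ.t (k + 1)))) ∧
  (∀ k, ∀ s ∈ Set.Ioo (σ.t k) (σ.t (k + 1)), HasDerivAt x (At s *ᵥ x s) s) ∧
  ContinuousWithinAt x (Set.Ici (σ.t 0)) (σ.t 0) ∧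
  (∀ k, 1 ≤ k →
    Filter.Tendsto x (nhdsWithin (σ.t k) (Set.Ioi (σ.t k))) (nhds (J k *ᵥ x (σ.t k))))

/-- A function `f` is piecewise-C¹ along the impulse sequence, with derivative `f'` on the
interiors of the flow intervals and right limits `fplus k = f(t_k⁺)` at the impulse times. -/
def PiecewiseC1 {n : ℕ} (σ : ImpulseSeq)
    (f f' : ℝ → Fin n → ℝ) (fplus : ℕ → Fin n → ℝ) : Prop :=
  (∀ k, ContinuousOn f (Set.Ioc (σ.t k) (σ.t (k + 1)))) ∧
  (∀ k, ∀ s ∈ Set.Ioo (σ.t k) (σ.t (k + 1)), HasDerivAt f (f' s) s) ∧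
  (∀ k, ContinuousOn f' (Set.Ioo (σ.t k) (σ.t (k + 1)))) ∧
  ContinuousWithinAt f (Set.Ici (σ.t 0)) (σ.t 0) ∧
  (∀ k, 1 ≤ k →
    Filter.Tendsto f (nhdsWithin (σ.t k) (Set.Ioi (σ.t k))) (nhds (fplus k)))

theorem le_zero_of_hasDerivAt_neg_of_eq_zero {ι : Type*} [Finite ι] {g g' : ℝ → ι → ℝ}
    {a b : ℝ} (hcont : ContinuousOn g (Icc a b))
    (hderiv : ∀ z ∈ Ico a b, HasDerivAt g (g' z) z) (ha : g a ≤ 0)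
    (hbarrier : ∀ z ∈ Ico a b, g z ≤ 0 → ∀ j, g z j = 0 → g' z j < 0) :
    ∀ z ∈ Icc a b, g z ≤ 0 := by
  have hclosed : IsClosed ({z | g z ≤ 0} ∩ Icc a b) := by
    rw [inter_comm]
    exact hcont.preimage_isClosed_of_isClosed isClosed_Icc isClosed_Iic
  refine fun z hz => hclosed.Icc_subset_of_forall_mem_nhdsWithin ha ?_ hz
  rintro z ⟨hgz, hz⟩
  suffices ∀ j, ∀ᶠ w in 𝓝[>] z, g w j ≤ 0 from eventually_all.2 this
  intro j
  have hgj : HasDerivAt (fun w => g w j) (g' z j) z := hasDerivAt_pi.1 (hderiv z hz) j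
  rcases (hgz j).lt_or_eq with hlt | heq
  · exact ((hgj.continuousAt.eventually_lt continuousAt_const hlt).filter_mono
      nhdsWithin_le_nhds).mono fun w hw => hw.le
  · filter_upwards [hgj.hasDerivWithinAt.limsup_slope_le' (lt_irrefl z) (hbarrier z hz hgz j heq),
      self_mem_nhdsWithin] with w hslope hw
    rw [slope_def_field, heq, Pi.zero_apply, sub_zero] at hslope
    exact (neg_of_div_neg_left hslope (sub_pos.2 hw).le).le

theorem eventually_abs_le_of_tendsto {α ι : Type*} [Finite ι] {l : Filter α}
    {x v : α → ι → ℝ} {X V : ι → ℝ} (hx : Tendsto x l (𝓝 X)) (hv : Tendsto v l (𝓝 V))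
    (h : ∀ i, |X i| < V i) : ∀ᶠ s in l, |x s| ≤ v s := by
  refine (eventually_all.2 fun i => ?_).mono fun s hs i => hs i
  exact ((tendsto_pi_nhds.1 hx i).abs.eventually_lt (tendsto_pi_nhds.1 hv i) (h i)).mono
    fun s hs => hs.le

theorem lt_ciInf_of_finite {ι α : Type*} [Finite ι] [Nonempty ι]
    [ConditionallyCompleteLinearOrder α] {f : ι → α} {a : α} (h : ∀ i, a < f i) :
    a < ⨅ i, f i :=
  (exists_eq_ciInf_of_finite (f := f)).elim fun i hi => hi ▸ h i

theorem iInf_div_mul_le {ι : Type*} [Finite ι] [Nonempty ι] {f : ι → ℝ} (hf : ∀ i, 0 < f i)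
    {U y : ℝ} (hU : 0 < U) (hy : y ≤ U) (i : ι) : (⨅ j, f j) / U * y ≤ f i := by
  rw [div_mul_eq_mul_div, div_le_iff₀ hU]
  calc (⨅ j, f j) * y ≤ (⨅ j, f j) * U := by gcongr; exact (lt_ciInf_of_finite hf).le
    _ ≤ f i * U := by gcongr; exact ciInf_le (Finite.bddBelow_range f) i

theorem Metzler.mulVec_apply_le {n : ℕ} {A : Matrix (Fin n) (Fin n) ℝ} (hA : Metzler A)
    {x v : Fin n → ℝ} (hle : x ≤ v) {i : Fin n} (hi : x i = v i) :
    (A *ᵥ x) i ≤ (A *ᵥ v) i := by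
  show ∑ j, A i j * x j ≤ ∑ j, A i j * v j
  refine Finset.sum_le_sum fun j _ => ?_
  rcases eq_or_ne i j with rfl | hij
  · rw [hi]
  · exact mul_le_mul_of_nonneg_left (hle j) (hA i j hij)

theorem abs_mulVec_le {m n : Type*} [Fintype n] {J : Matrix m n ℝ} (hJ : ∀ i j, 0 ≤ J i j)
    {x v : n → ℝ} (hxv : |x| ≤ v) : |J *ᵥ x| ≤ J *ᵥ v := by
  have hJi : ∀ i, 0 ≤ J i := fun i j => hJ i j
  obtain ⟨hx, hnx⟩ := abs_le'.1 hxv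
  refine abs_le'.2 ⟨fun i => ?_, fun i => ?_⟩
  · exact dotProduct_le_dotProduct_of_nonneg_left hx (hJi i)
  · rw [← mulVec_neg]
    exact dotProduct_le_dotProduct_of_nonneg_left hnx (hJi i)

section MetzlerComparison

variable {n : ℕ} {A : ℝ → Matrix (Fin n) (Fin n) ℝ} {x v v' : ℝ → Fin n → ℝ} {a b : ℝ}

theorem le_of_metzler_supersolution (hA : ∀ s ∈ Ioo a b, Metzler (A s))
    (hx_cont : ContinuousOn x (Ioc a b)) (hx : ∀ s ∈ Ioo a b, HasDerivAt x (A s *ᵥ x s) s)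
    (hv_cont : ContinuousOn v (Ioc a b)) (hv : ∀ s ∈ Ioo a b, HasDerivAt v (v' s) s)
    (hsuper : ∀ s ∈ Ioo a b, ∀ i, (A s *ᵥ v s) i < v' s i)
    (hstart : ∀ᶠ s in 𝓝[>] a, x s ≤ v s) :
    ∀ s ∈ Ioc a b, x s ≤ v s := by
  intro z hz
  obtain ⟨a', hxa', ha'⟩ := (hstart.and (Ioo_mem_nhdsGT hz.1)).exists
  have hIcc : Icc a' z ⊆ Ioc a b := fun w hw => ⟨ha'.1.trans_le hw.1, hw.2.trans hz.2⟩
  have hIco : Ico a' z ⊆ Ioo a b := fun w hw => ⟨ha'.1.trans_le hw.1, hw.2.trans_le hz.2⟩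
  refine sub_nonpos.1 <| le_zero_of_hasDerivAt_neg_of_eq_zero (g := x - v)
    (g' := fun w => A w *ᵥ x w - v' w) ((hx_cont.sub hv_cont).mono hIcc)
    (fun w hw => (hx w (hIco hw)).sub (hv w (hIco hw))) (sub_nonpos.2 hxa') ?_ z
    ⟨ha'.2.le, le_rfl⟩
  intro w hw hle j heq
  refine sub_neg.2 ?_
  calc (A w *ᵥ x w) j ≤ (A w *ᵥ v w) j :=
        (hA w (hIco hw)).mulVec_apply_le (sub_nonpos.1 hle) (sub_eq_zero.1 heq)
    _ < v' w j := hsuper w (hIco hw) j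

theorem abs_le_of_metzler_supersolution (hA : ∀ s ∈ Ioo a b, Metzler (A s))
    (hx_cont : ContinuousOn x (Ioc a b)) (hx : ∀ s ∈ Ioo a b, HasDerivAt x (A s *ᵥ x s) s)
    (hv_cont : ContinuousOn v (Ioc a b)) (hv : ∀ s ∈ Ioo a b, HasDerivAt v (v' s) s)
    (hsuper : ∀ s ∈ Ioo a b, ∀ i, (A s *ᵥ v s) i < v' s i)
    (hstart : ∀ᶠ s in 𝓝[>] a, |x s| ≤ v s) :
    ∀ s ∈ Ioc a b, |x s| ≤ v s := by
  have hle := le_of_metzler_supersolution hA hx_cont hx hv_cont hv hsuper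
    (hstart.mono fun s hs => (abs_le'.1 hs).1)
  have hge := le_of_metzler_supersolution (x := -x) hA hx_cont.neg
    (fun s hs => by simpa only [Pi.neg_apply, mulVec_neg] using (hx s hs).neg) hv_cont hv hsuper
    (hstart.mono fun s hs => (abs_le'.1 hs).2)
  exact fun s hs => abs_le'.2 ⟨hle s hs, hge s hs⟩

end MetzlerComparison

namespace ImpulseSeq

variable (σ : ImpulseSeq)

theorem t_zero_le (k : ℕ) : σ.t 0 ≤ σ.t k := σ.mono.monotone k.zero_le

theorem kappa_self (s : ℝ) : σ.kappa s s = 0 := by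
  have : {k : ℕ | 1 ≤ k ∧ s ≤ σ.t k ∧ σ.t k < s} = ∅ :=
    eq_empty_of_forall_notMem fun _ hk => hk.2.1.not_gt hk.2.2
  rw [kappa, this, ncard_empty]

theorem kappa_eq_of_mem_Ioc {k : ℕ} {s : ℝ} (hs : s ∈ Ioc (σ.t k) (σ.t (k + 1))) :
    σ.kappa (σ.t 0) s = k := by
  have : {j : ℕ | 1 ≤ j ∧ σ.t 0 ≤ σ.t j ∧ σ.t j < s} = Finset.Icc 1 k := by
    ext j
    simp only [mem_ofPred_eq, Finset.coe_Icc, mem_Icc, σ.t_zero_le j, true_and]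
    refine and_congr_right fun _ => ⟨fun hj => ?_, fun hj => (σ.mono.monotone hj).trans_lt hs.1⟩
    exact Nat.lt_succ_iff.1 (σ.mono.lt_iff_lt.1 (hj.trans_le hs.2))
  rw [kappa, this, Set.ncard_coe_finset, Nat.card_Icc, Nat.add_sub_cancel]

theorem exists_mem_Ioc {s : ℝ} (hs : σ.t 0 < s) : ∃ k, s ∈ Ioc (σ.t k) (σ.t (k + 1)) := by
  have hex : ∃ k, s ≤ σ.t k := (σ.tendsto_atTop.eventually_ge_atTop s).exists
  obtain ⟨k, hk⟩ := Nat.exists_eq_add_one_of_ne_zero fun h0 : Nat.find hex = 0 =>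
    hs.not_ge (h0 ▸ Nat.find_spec hex)
  exact ⟨k, not_le.1 (Nat.find_min hex (hk ▸ k.lt_succ_self)), hk ▸ Nat.find_spec hex⟩

noncomputable def decayWeight (c ρ α : ℝ) (k : ℕ) (s : ℝ) : ℝ :=
  c * ρ ^ k * Real.exp (-(α * (s - σ.t 0)))

variable (c ρ α : ℝ) (k : ℕ)

theorem decayWeight_succ (s : ℝ) :
    σ.decayWeight c ρ α (k + 1) s = ρ * σ.decayWeight c ρ α k s := by
  simp only [decayWeight]
  ring

theorem decayWeight_zero_t_zero : σ.decayWeight c ρ α 0 (σ.t 0) = c := by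
  rw [decayWeight, pow_zero, sub_self, mul_zero, neg_zero, Real.exp_zero, mul_one, mul_one]

variable {c ρ} in
theorem decayWeight_pos (hc : 0 < c) (hρ : 0 < ρ) (s : ℝ) : 0 < σ.decayWeight c ρ α k s := by
  unfold decayWeight
  positivity

theorem hasDerivAt_decayWeight (s : ℝ) :
    HasDerivAt (σ.decayWeight c ρ α k) (-α * σ.decayWeight c ρ α k s) s := by
  have h : HasDerivAt (fun s => -(α * (s - σ.t 0))) (-α) s := by
    simpa using (((hasDerivAt_id' s).sub_const (σ.t 0)).const_mul α).fun_neg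
  refine (h.exp.const_mul (c * ρ ^ k)).congr_deriv ?_
  simp only [decayWeight]
  ring

theorem continuous_decayWeight : Continuous (σ.decayWeight c ρ α k) :=
  continuous_iff_continuousAt.2 fun s => (σ.hasDerivAt_decayWeight c ρ α k s).continuousAt

end ImpulseSeq

theorem PiecewiseC1.rightLim_le {n : ℕ} {σ : ImpulseSeq} {f f' : ℝ → Fin n → ℝ}
    {fplus : ℕ → Fin n → ℝ} (hpc : PiecewiseC1 σ f f' fplus) {B : Fin n → ℝ}
    (hB : ∀ s, σ.t 0 ≤ s → f s ≤ B) {k : ℕ} (hk : 1 ≤ k) : fplus k ≤ B :=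
  le_of_tendsto (hpc.2.2.2.2 k hk)
    (eventually_nhdsWithin_of_forall fun s hs => hB s ((σ.t_zero_le k).trans hs.le))

section Certificate

variable {n : ℕ} {σ : ImpulseSeq} {At : ℝ → Matrix (Fin n) (Fin n) ℝ}
  {J : ℕ → Matrix (Fin n) (Fin n) ℝ} {x ξ ξ' : ℝ → Fin n → ℝ} {ξp : ℕ → Fin n → ℝ} {c ρ α : ℝ}

theorem IsHomTrajectory.abs_le_decayWeight_smul_of_eventually (hx : IsHomTrajectory σ At J x)
    (hAM : ∀ t, σ.t 0 ≤ t → Metzler (At t)) (hpc : PiecewiseC1 σ ξ ξ' ξp)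
    (hflow : ∀ k, ∀ s ∈ Ioo (σ.t k) (σ.t (k + 1)), ∀ i, (At s *ᵥ ξ s) i < ξ' s i - α * ξ s i)
    (hρ : 0 < ρ) (hc : 0 < c) (k : ℕ)
    (hstart : ∀ᶠ s in 𝓝[>] σ.t k, |x s| ≤ σ.decayWeight c ρ α k s • ξ s) :
    ∀ s ∈ Ioc (σ.t k) (σ.t (k + 1)), |x s| ≤ σ.decayWeight c ρ α k s • ξ s := by
  set m := σ.decayWeight c ρ α k
  refine abs_le_of_metzler_supersolution (fun s hs => hAM s ((σ.t_zero_le k).trans hs.1.le))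
    (hx.1 k) (hx.2.1 k) (((σ.continuous_decayWeight c ρ α k).continuousOn).smul (hpc.1 k))
    (fun s hs => (σ.hasDerivAt_decayWeight c ρ α k s).smul (hpc.2.1 k s hs)) (fun s hs i => ?_)
    hstart
  have hm := σ.decayWeight_pos α k hc hρ s
  calc (At s *ᵥ (m s • ξ s)) i = m s * (At s *ᵥ ξ s) i := by
        rw [mulVec_smul, Pi.smul_apply, smul_eq_mul]
    _ < m s * (ξ' s i - α * ξ s i) := mul_lt_mul_of_pos_left (hflow k s hs i) hm
    _ = (m s • ξ' s + (-α * m s) • ξ s) i := by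
        simp only [Pi.add_apply, Pi.smul_apply, smul_eq_mul]
        ring

theorem IsHomTrajectory.abs_le_decayWeight_smul_of_mem_Ioc (hx : IsHomTrajectory σ At J x)
    (hAM : ∀ t, σ.t 0 ≤ t → Metzler (At t)) (hJ : ∀ k, 1 ≤ k → ∀ i j, 0 ≤ J k i j)
    (hpc : PiecewiseC1 σ ξ ξ' ξp)
    (hflow : ∀ k, ∀ s ∈ Ioo (σ.t k) (σ.t (k + 1)), ∀ i, (At s *ᵥ ξ s) i < ξ' s i - α * ξ s i)
    (hjump : ∀ k, 1 ≤ k → ∀ i, (J k *ᵥ ξ (σ.t k)) i < ρ * ξp k i)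
    (hρ : 0 < ρ) (hc : 0 < c) (hx0 : ∀ i, |x (σ.t 0) i| < c * ξ (σ.t 0) i) (k : ℕ) :
    ∀ s ∈ Ioc (σ.t k) (σ.t (k + 1)), |x s| ≤ σ.decayWeight c ρ α k s • ξ s := by
  set m := σ.decayWeight c ρ α
  have flow := hx.abs_le_decayWeight_smul_of_eventually hAM hpc hflow hρ hc
  have tendsto_weight : ∀ k, Tendsto (m k) (𝓝[>] σ.t k) (𝓝 (m k (σ.t k))) := fun k =>
    ((σ.continuous_decayWeight c ρ α k).tendsto _).mono_left nhdsWithin_le_nhds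
  induction k with
  | zero =>
    refine flow 0 (eventually_abs_le_of_tendsto
      (hx.2.2.1.tendsto.mono_left (nhdsWithin_mono _ Ioi_subset_Ici_self))
      ((tendsto_weight 0).smul (hpc.2.2.2.1.tendsto.mono_left
        (nhdsWithin_mono _ Ioi_subset_Ici_self))) fun i => ?_)
    simpa only [Pi.smul_apply, smul_eq_mul, m, σ.decayWeight_zero_t_zero] using hx0 i
  | succ k ih =>
    refine flow (k + 1) (eventually_abs_le_of_tendsto (hx.2.2.2 (k + 1) k.succ_pos)
      ((tendsto_weight (k + 1)).smul (hpc.2.2.2.2 (k + 1) k.succ_pos)) fun i => ?_)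
    set t := σ.t (k + 1)
    have hm := σ.decayWeight_pos α k hc hρ t
    have hxt : |J (k + 1) *ᵥ x t| ≤ m k t • (J (k + 1) *ᵥ ξ t) := by
      rw [← mulVec_smul]
      exact abs_mulVec_le (hJ (k + 1) k.succ_pos) (ih t ⟨σ.mono k.lt_succ_self, le_rfl⟩)
    calc |(J (k + 1) *ᵥ x t) i| ≤ m k t * (J (k + 1) *ᵥ ξ t) i := hxt i
      _ < m k t * (ρ * ξp (k + 1) i) :=
          mul_lt_mul_of_pos_left (hjump (k + 1) k.succ_pos i) hm
      _ = (m (k + 1) t • ξp (k + 1)) i := by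
          simp only [m, σ.decayWeight_succ, Pi.smul_apply, smul_eq_mul]
          ring

theorem IsHomTrajectory.abs_le_decayWeight_smul (hx : IsHomTrajectory σ At J x)
    (hAM : ∀ t, σ.t 0 ≤ t → Metzler (At t)) (hJ : ∀ k, 1 ≤ k → ∀ i j, 0 ≤ J k i j)
    (hpc : PiecewiseC1 σ ξ ξ' ξp)
    (hflow : ∀ k, ∀ s ∈ Ioo (σ.t k) (σ.t (k + 1)), ∀ i, (At s *ᵥ ξ s) i < ξ' s i - α * ξ s i)
    (hjump : ∀ k, 1 ≤ k → ∀ i, (J k *ᵥ ξ (σ.t k)) i < ρ * ξp k i)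
    (hρ : 0 < ρ) (hc : 0 ≤ c) (hξ0 : ∀ i, 0 < ξ (σ.t 0) i) (hx0 : |x (σ.t 0)| ≤ c • ξ (σ.t 0))
    {s : ℝ} (hs : σ.t 0 ≤ s) :
    |x s| ≤ σ.decayWeight c ρ α (σ.kappa (σ.t 0) s) s • ξ s := by
  -- the comparison argument needs a strict inequality at `t₀`, so first enlarge `c`
  have strict : ∀ c' ∈ Ioi c, |x s| ≤ σ.decayWeight c' ρ α (σ.kappa (σ.t 0) s) s • ξ s := by
    intro c' hc'
    have hx0' : ∀ i, |x (σ.t 0) i| < c' * ξ (σ.t 0) i := fun i =>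
      (hx0 i).trans_lt (mul_lt_mul_of_pos_right hc' (hξ0 i))
    rcases hs.eq_or_lt with rfl | hs
    · rw [σ.kappa_self, σ.decayWeight_zero_t_zero]
      exact fun i => (hx0' i).le
    · obtain ⟨k, hk⟩ := σ.exists_mem_Ioc hs
      rw [σ.kappa_eq_of_mem_Ioc hk]
      exact hx.abs_le_decayWeight_smul_of_mem_Ioc hAM hJ hpc hflow hjump hρ (hc.trans_lt hc')
        hx0' k s hk
  have hcont : Continuous fun c' => σ.decayWeight c' ρ α (σ.kappa (σ.t 0) s) s • ξ s := by
    unfold ImpulseSeq.decayWeight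
    fun_prop
  exact ge_of_tendsto ((hcont.tendsto c).mono_left nhdsWithin_le_nhds)
    (eventually_nhdsWithin_of_forall strict)

theorem IsHomTrajectory.norm_le (hx : IsHomTrajectory σ At J x)
    (hAM : ∀ t, σ.t 0 ≤ t → Metzler (At t)) (hJ : ∀ k, 1 ≤ k → ∀ i j, 0 ≤ J k i j)
    (hpc : PiecewiseC1 σ ξ ξ' ξp)
    (hflow : ∀ k, ∀ s ∈ Ioo (σ.t k) (σ.t (k + 1)), ∀ i, (At s *ᵥ ξ s) i < ξ' s i - α * ξ s i)
    (hjump : ∀ k, 1 ≤ k → ∀ i, (J k *ᵥ ξ (σ.t k)) i < ρ * ξp k i) (hρ : 0 < ρ)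
    {L U : ℝ} (hL : 0 < L) (hU : 0 ≤ U) (hbound : ∀ s, σ.t 0 ≤ s → ∀ i, L ≤ ξ s i ∧ ξ s i ≤ U)
    {s : ℝ} (hs : σ.t 0 ≤ s) :
    ‖x s‖ ≤ U / L * (ρ ^ σ.kappa (σ.t 0) s * (Real.exp (-(α * (s - σ.t 0))) * ‖x (σ.t 0)‖)) := by
  set c := ‖x (σ.t 0)‖ / L
  have hx0 : |x (σ.t 0)| ≤ c • ξ (σ.t 0) := fun i => calc
    |x (σ.t 0) i| ≤ ‖x (σ.t 0)‖ := norm_le_pi_norm (x (σ.t 0)) i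
    _ = c * L := (div_mul_cancel₀ _ hL.ne').symm
    _ ≤ c * ξ (σ.t 0) i := by gcongr; exact (hbound _ le_rfl i).1
  have habs := hx.abs_le_decayWeight_smul hAM hJ hpc hflow hjump hρ (by positivity)
    (fun i => hL.trans_le (hbound _ le_rfl i).1) hx0 hs
  have hm : 0 ≤ σ.decayWeight c ρ α (σ.kappa (σ.t 0) s) s := by
    unfold ImpulseSeq.decayWeight
    positivity
  calc ‖x s‖ ≤ σ.decayWeight c ρ α (σ.kappa (σ.t 0) s) s * U :=
        (pi_norm_le_iff_of_nonneg (mul_nonneg hm hU)).2 fun i =>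
          (habs i).trans (mul_le_mul_of_nonneg_left (hbound s hs i).2 hm)
    _ = _ := by
        simp only [ImpulseSeq.decayWeight, c]
        field_simp

end Certificate

theorem max_separable_lyapunov_suff_general {n : ℕ} (hn : 0 < n) (σ : ImpulseSeq)
    (At : ℝ → Matrix (Fin n) (Fin n) ℝ) (J : ℕ → Matrix (Fin n) (Fin n) ℝ)
    (hAM : ∀ t : ℝ, 0 ≤ t → Metzler (At t))
    (hJ : ∀ k : ℕ, 1 ≤ k → ∀ i j, 0 ≤ J k i j)
    (b d : Fin n → ℝ) (hb : ∀ i, 0 < b i) (hd : ∀ i, 0 < d i)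
    (ξ ξ' : ℝ → Fin n → ℝ) (ξp : ℕ → Fin n → ℝ)
    (hpc : PiecewiseC1 σ ξ ξ' ξp)
    (ξ1 ξ2 : Fin n → ℝ) (hξ1 : ∀ i, 0 < ξ1 i)
    (hbound : ∀ s : ℝ, σ.t 0 ≤ s → ∀ i, ξ1 i ≤ ξ s i ∧ ξ s i ≤ ξ2 i)
    (hflow : ∀ k, ∀ s ∈ Set.Ioo (σ.t k) (σ.t (k + 1)),
      ∀ i, (-(ξ' s) + At s *ᵥ ξ s + b) i < 0)
    (hjump : ∀ k : ℕ, 1 ≤ k → ∀ i, (J k *ᵥ ξ (σ.t k) - ξp k + d) i < 0) :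
    (1 - (⨅ i, d i) / (⨆ i, ξ2 i)) ∈ Set.Ioo (0 : ℝ) 1 ∧
    (∀ x : ℝ → Fin n → ℝ, IsHomTrajectory σ At J x → (∀ i, 0 ≤ x (σ.t 0) i) →
      ∀ s : ℝ, σ.t 0 ≤ s →
        ‖x s‖ ≤ ((⨆ i, ξ2 i) / (⨅ i, ξ1 i)) *
          ((1 - (⨅ i, d i) / (⨆ i, ξ2 i)) ^ (σ.kappa (σ.t 0) s) *
            (Real.exp (-(((⨅ i, b i) / (⨆ i, ξ2 i)) * (s - σ.t 0))) * ‖x (σ.t 0)‖))) ∧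
    (∃ M : ℝ, 0 < M ∧
      ∀ x : ℝ → Fin n → ℝ, IsHomTrajectory σ At J x →
        ∀ s : ℝ, σ.t 0 ≤ s →
          ‖x s‖ ≤ M * ((1 - (⨅ i, d i) / (⨆ i, ξ2 i)) ^ (σ.kappa (σ.t 0) s) *
            (Real.exp (-(((⨅ i, b i) / (⨆ i, ξ2 i)) * (s - σ.t 0))) * ‖x (σ.t 0)‖))) := by
  let i₀ : Fin n := ⟨0, hn⟩
  have : Nonempty (Fin n) := ⟨i₀⟩
  set S1 := ⨅ i, ξ1 i
  set S2 := ⨆ i, ξ2 i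
  set α := (⨅ i, b i) / S2
  set ρ := 1 - (⨅ i, d i) / S2
  have hξS2 : ∀ s, σ.t 0 ≤ s → ξ s ≤ fun _ => S2 := fun s hs i =>
    (hbound s hs i).2.trans (le_ciSup (Finite.bddAbove_range ξ2) i)
  have hS2 : 0 < S2 := (hξ1 i₀).trans_le ((hbound _ le_rfl i₀).1.trans (hξS2 _ le_rfl i₀))
  -- `ρ > 0` comes from the first jump: `0 ≤ J̃(1) ξ(t₁) < ξ(t₁⁺) - d ≤ ξ̄₂ - d`
  have hdS2 : (⨅ i, d i) < S2 := by
    have hJξ : 0 ≤ (J 1 *ᵥ ξ (σ.t 1)) i₀ := dotProduct_nonneg_of_nonneg (hJ 1 le_rfl i₀)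
      fun j => (hξ1 j).le.trans (hbound _ (σ.t_zero_le 1) j).1
    have := hjump 1 le_rfl i₀
    simp only [Pi.add_apply, Pi.sub_apply] at this
    linarith [ciInf_le (Finite.bddBelow_range d) i₀, hpc.rightLim_le hξS2 le_rfl i₀]
  have hρ : ρ ∈ Ioo 0 1 :=
    ⟨sub_pos.2 ((div_lt_one hS2).2 hdS2), sub_lt_self 1 (div_pos (lt_ciInf_of_finite hd) hS2)⟩
  have hflow' : ∀ k, ∀ s ∈ Ioo (σ.t k) (σ.t (k + 1)), ∀ i,
      (At s *ᵥ ξ s) i < ξ' s i - α * ξ s i := by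
    intro k s hs i
    have := hflow k s hs i
    simp only [Pi.add_apply, Pi.neg_apply] at this
    linarith [iInf_div_mul_le hb hS2 (hξS2 s ((σ.t_zero_le k).trans hs.1.le) i) i]
  have hjump' : ∀ k, 1 ≤ k → ∀ i, (J k *ᵥ ξ (σ.t k)) i < ρ * ξp k i := by
    intro k hk i
    have := hjump k hk i
    simp only [Pi.add_apply, Pi.sub_apply] at this
    rw [show ρ * ξp k i = ξp k i - (⨅ i, d i) / S2 * ξp k i by ring]
    linarith [iInf_div_mul_le hd hS2 (hpc.rightLim_le hξS2 hk i) i]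
  have hbound' : ∀ s, σ.t 0 ≤ s → ∀ i, S1 ≤ ξ s i ∧ ξ s i ≤ S2 := fun s hs i =>
    ⟨(ciInf_le (Finite.bddBelow_range ξ1) i).trans (hbound s hs i).1, hξS2 s hs i⟩
  have key := fun x (hx : IsHomTrajectory σ At J x) s (hs : σ.t 0 ≤ s) =>
    hx.norm_le (fun t ht => hAM t (σ.t0_nonneg.trans ht)) hJ hpc hflow' hjump' hρ.1
      (lt_ciInf_of_finite hξ1) hS2.le hbound' hs
  exact ⟨hρ, fun x hx _ => key x hx, S2 / S1, div_pos hS2 (lt_ciInf_of_finite hξ1), key⟩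

/-- Sufficiency of a linear max-separable copositive Lyapunov certificate: quantitative
exponential decay in the sup-norm with hybrid rate `(α, ρ)`. -/
theorem max_separable_lyapunov_suff {n : ℕ} (hn : 0 < n) (σ : ImpulseSeq)
    (At : ℝ → Matrix (Fin n) (Fin n) ℝ) (J : ℕ → Matrix (Fin n) (Fin n) ℝ)
    (hAcont : ContinuousOn At (Set.Ici 0))
    (hAb : ∃ M, ∀ t ∈ Set.Ici (0 : ℝ), ∀ i j, |At t i j| ≤ M)
    (hAM : ∀ t : ℝ, 0 ≤ t → Metzler (At t))
    (hJ : ∀ k : ℕ, 1 ≤ k → ∀ i j, 0 ≤ J k i j)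
    (b d : Fin n → ℝ) (hb : ∀ i, 0 < b i) (hd : ∀ i, 0 < d i)
    (ξ ξ' : ℝ → Fin n → ℝ) (ξp : ℕ → Fin n → ℝ)
    (hpc : PiecewiseC1 σ ξ ξ' ξp)
    (ξ1 ξ2 : Fin n → ℝ) (hξ1 : ∀ i, 0 < ξ1 i) (hξ12 : ∀ i, ξ1 i ≤ ξ2 i)
    (hbound : ∀ s : ℝ, σ.t 0 ≤ s → ∀ i, ξ1 i ≤ ξ s i ∧ ξ s i ≤ ξ2 i)
    (hflow : ∀ k, ∀ s ∈ Set.Ioo (σ.t k) (σ.t (k + 1)),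
      ∀ i, (-(ξ' s) + At s *ᵥ ξ s + b) i < 0)
    (hjump : ∀ k : ℕ, 1 ≤ k → ∀ i, (J k *ᵥ ξ (σ.t k) - ξp k + d) i < 0) :
    (1 - (⨅ i, d i) / (⨆ i, ξ2 i)) ∈ Set.Ioo (0 : ℝ) 1 ∧
    (∀ x : ℝ → Fin n → ℝ, IsHomTrajectory σ At J x → (∀ i, 0 ≤ x (σ.t 0) i) →
      ∀ s : ℝ, σ.t 0 ≤ s →
        ‖x s‖ ≤ ((⨆ i, ξ2 i) / (⨅ i, ξ1 i)) *
          ((1 - (⨅ i, d i) / (⨆ i, ξ2 i)) ^ (σ.kappa (σ.t 0) s) *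
            (Real.exp (-(((⨅ i, b i) / (⨆ i, ξ2 i)) * (s - σ.t 0))) * ‖x (σ.t 0)‖))) ∧
    (∃ M : ℝ, 0 < M ∧
      ∀ x : ℝ → Fin n → ℝ, IsHomTrajectory σ At J x →
        ∀ s : ℝ, σ.t 0 ≤ s →
          ‖x s‖ ≤ M * ((1 - (⨅ i, d i) / (⨆ i, ξ2 i)) ^ (σ.kappa (σ.t 0) s) *
            (Real.exp (-(((⨅ i, b i) / (⨆ i, ξ2 i)) * (s - σ.t 0))) * ‖x (σ.t 0)‖))) :=
  max_separable_lyapunov_suff_general hn σ At J hAM hJ b d hb hd ξ ξ' ξp hpc ξ1 ξ2 hξ1 hbound hflow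
    hjump
end

section
/- Let T̄ > 0 and γ > 0. Let A : [0,T̄] → ℝ^{n×n} be continuous with A(τ) Metzler for every τ, let E_c : [0,T̄] → ℝ^{n×p_c}, C_c : [0,T̄] → ℝ^{q_c×n}, F_c : [0,T̄] → ℝ^{q_c×p_c} be continuous and entrywise nonnegative, and let J ≥ 0, E_d ≥ 0, C_d ≥ 0, F_d ≥ 0 be constant matrices; let Φ be the state-transition matrix of A. Then the following are equivalent: (a) there exists a vector λ ∈ ℝ^n with λ > 0 such that (J Φ(T̄,0) − I)λ + J ∫₀^{T̄} Φ(T̄,s) E_c(s) 𝟙 ds + E_d𝟙 < 0, C_c(τ)(Φ(τ,0)λ + ∫₀^{τ} Φ(τ,s) E_c(s) 𝟙 ds) + F_c(τ)𝟙 < γ𝟙 for all τ ∈ [0,T̄], and C_d(Φ(T̄,0)λ + ∫₀^{T̄} Φ(T̄,s) E_c(s) 𝟙 ds) + F_d𝟙 < γ𝟙; (b) there exists a continuously differentiable function ζ : [0,T̄] → ℝ^n with ζ(0) > 0 such that −ζ̇(τ) + A(τ)ζ(τ) + E_c(τ)𝟙 < 0 and C_c(τ)ζ(τ) + F_c(τ)𝟙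 − γ𝟙 < 0 for all τ ∈ [0,T̄], and J ζ(T̄) − ζ(0) + E_d𝟙 < 0 and C_d ζ(T̄) + F_d𝟙 − γ𝟙 < 0. -/
open Matrix Set intervalIntegral

open Filter Topology MeasureTheory

/-!
Let `y_v(t) = Φ(t,0) v + ∫₀ᵗ Φ(t,s) E_c(s) 𝟙 ds` be the mild solution of `ẏ = A y + E_c 𝟙` with
`y(0) = v`; condition (a) says that `y_λ` satisfies the inequalities of (b) in integrated form.
Given (a), let `ψ` be the mild solution of `ψ̇ = A ψ + 𝟙` with `ψ(0) = 0`: then `ζ = y_λ + ε ψ`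
satisfies `-ζ̇ + A ζ + E_c 𝟙 = -ε 𝟙 < 0`, and for small `ε > 0` it keeps the strict
inequalities of `y_λ`, by compactness of `[0, T̄]`. Conversely, given (b), `w = ζ - y_{ζ(0)}`
satisfies `ẇ > A w` and `w(0) = 0`; as `A` is Metzler, `w` stays nonnegative, and the
nonnegativity of `J`, `C_c`, `C_d` turns the inequalities of (b) into those of (a).

Only the defining properties of `Φ` are available, so the differentiability of `y_v` is derived
from them: Gronwall bounds, the cocycle identity `Φ(t,r) Φ(r,s) = Φ(t,s)` by ODE uniqueness, and
the restart formula `y(t') = Φ(t',t) y(t) + ∫ₜ^{t'} Φ(t',s) E_c(s) 𝟙 ds`, which yields the right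
derivative of `y`.
-/

theorem Metzler.mulVec_apply_nonneg {n : ℕ} {M : Matrix (Fin n) (Fin n) ℝ} (hM : Metzler M)
    {v : Fin n → ℝ} (hv : 0 ≤ v) {i : Fin n} (hi : v i = 0) : 0 ≤ (M *ᵥ v) i := by
  simp only [mulVec, dotProduct]
  refine Finset.sum_nonneg fun j _ => ?_
  rcases eq_or_ne i j with rfl | hij
  · simp [hi]
  · exact mul_nonneg (hM i j hij) (hv j)

theorem Matrix.mulVec_le_mulVec_of_nonneg {m n R : Type*} [Fintype n] [Semiring R]
    [PartialOrder R] [IsOrderedRing R] {M : Matrix m n R} (hM : ∀ i j, 0 ≤ M i j) {v w : n → R}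
    (hvw : v ≤ w) :
    M *ᵥ v ≤ M *ᵥ w :=
  fun i => dotProduct_le_dotProduct_of_nonneg_left hvw (hM i)

@[fun_prop]
theorem ContinuousOn.matrix_mulVec {X m n R : Type*} [TopologicalSpace X] [TopologicalSpace R]
    [NonUnitalNonAssocSemiring R] [ContinuousAdd R] [ContinuousMul R] [Fintype n]
    {A : X → Matrix m n R} {v : X → n → R} {s : Set X} (hA : ContinuousOn A s)
    (hv : ContinuousOn v s) : ContinuousOn (fun x => A x *ᵥ v x) s := by
  rw [continuousOn_iff_continuous_domRestrict] at *
  exact hA.matrix_mulVec hv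

theorem Matrix.exists_norm_mulVec_le_of_continuousOn {X m n : Type*} [TopologicalSpace X]
    [Fintype m] [Fintype n] {A : X → Matrix m n ℝ} {s : Set X} (hs : IsCompact s)
    (hA : ContinuousOn A s) :
    ∃ K, 0 ≤ K ∧ ∀ x ∈ s, ∀ v, ‖A x *ᵥ v‖ ≤ K * ‖v‖ := by
  let _ := Matrix.linftyOpNormedAddCommGroup (m := m) (n := n) (α := ℝ)
  obtain ⟨K, hK⟩ := hs.exists_bound_of_continuousOn hA
  exact ⟨max K 0, le_max_right _ _, fun x hx v => (linfty_opNorm_mulVec _ _).trans <|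
    mul_le_mul_of_nonneg_right ((hK x hx).trans (le_max_left _ _)) (norm_nonneg v)⟩

theorem HasDerivWithinAt.Ici_of_Icc {E : Type*} [NormedAddCommGroup E] [NormedSpace ℝ E]
    {f : ℝ → E} {f' : E} {a b x : ℝ} (h : HasDerivWithinAt f f' (Icc a b) x) (hx : x ∈ Ico a b) :
    HasDerivWithinAt f f' (Ici x) x :=
  h.mono_of_mem_nhdsWithin <| mem_of_superset (Icc_mem_nhdsGE hx.2) (Icc_subset_Icc_left hx.1)

theorem hasDerivWithinAt_zero_of_norm_le_sq {E : Type*} [NormedAddCommGroup E] [NormedSpace ℝ E]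
    {f : ℝ → E} {s : Set ℝ} {x C : ℝ} (hx : f x = 0)
    (hf : ∀ᶠ y in 𝓝[s] x, ‖f y‖ ≤ C * (y - x) ^ 2) :
    HasDerivWithinAt f 0 s x := by
  refine .of_isLittleO ?_
  simp only [hx, sub_zero, smul_zero]
  refine (Asymptotics.IsBigO.of_bound C ?_).trans_isLittleO
    ((Asymptotics.isLittleO_pow_sub_sub x one_lt_two).mono nhdsWithin_le_nhds)
  filter_upwards [hf] with y hy
  simpa [Real.norm_eq_abs, sq_abs] using hy

theorem continuousOn_of_norm_sub_le_mul_sub {E : Type*} [SeminormedAddCommGroup E] {f : ℝ → E}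
    {s : Set ℝ} (L : ℝ) (h : ∀ x ∈ s, ∀ y ∈ s, x ≤ y → ‖f y - f x‖ ≤ L * (y - x)) :
    ContinuousOn f s := by
  refine (LipschitzOnWith.of_dist_le' (K := L) fun x hx y hy => ?_).continuousOn
  rcases le_total x y with hxy | hxy
  · rw [dist_comm, dist_eq_norm, Real.dist_eq, abs_sub_comm, abs_of_nonneg (sub_nonneg.2 hxy)]
    exact h x hx y hy hxy
  · rw [dist_eq_norm, Real.dist_eq, abs_of_nonneg (sub_nonneg.2 hxy)]
    exact h y hy x hx hxy

theorem hasDerivWithinAt_Icc_of_forall_hasDerivWithinAt_Ici {E : Type*} [NormedAddCommGroup E]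
    [NormedSpace ℝ E] [CompleteSpace E] {f g : ℝ → E} {a b x : ℝ} (hf : ContinuousOn f (Icc a b))
    (hg : ContinuousOn g (Icc a b)) (hfg : ∀ y ∈ Ico a b, HasDerivWithinAt f (g y) (Ici y) y)
    (hx : x ∈ Icc a b) : HasDerivWithinAt f (g x) (Icc a b) x := by
  have hab : a ≤ b := hx.1.trans hx.2
  set G := IccExtend hab ((Icc a b).domRestrict g)
  have hG : Continuous G := (continuousOn_iff_continuous_domRestrict.1 hg).Icc_extend'
  have hGg : EqOn G g (Icc a b) := fun y hy => IccExtend_of_mem hab _ hy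
  have hprim (y : ℝ) : HasDerivAt (fun u => ∫ s in a..u, G s) (G y) y :=
    (hG.integral_hasStrictDerivAt a y).hasDerivAt
  -- `f` differs from a primitive of the continuous extension of `g` by a constant
  have hconst : ∀ y ∈ Icc a b, f y - ∫ s in a..y, G s = f a := by
    intro y hy
    simpa using constant_of_has_deriv_right_zero
      (hf.sub (continuous_primitive (fun _ _ => hG.intervalIntegrable _ _) a).continuousOn)
      (fun z hz => by simpa [hGg (Ico_subset_Icc_self hz)] using
        (hfg z hz).sub (hprim z).hasDerivWithinAt) y hy
  rw [← hGg hx]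
  exact ((hprim x).hasDerivWithinAt.const_add (f a)).congr
    (fun y hy => by rw [← hconst y hy]; abel) (by rw [← hconst x hx]; abel)

theorem Metzler.nonneg_of_mulVec_lt_deriv {n : ℕ} {A : ℝ → Matrix (Fin n) (Fin n) ℝ}
    {w w' : ℝ → Fin n → ℝ} {a b : ℝ} (hA : ∀ τ ∈ Icc a b, Metzler (A τ))
    (hw : ∀ τ ∈ Icc a b, HasDerivWithinAt w (w' τ) (Icc a b) τ)
    (hlt : ∀ τ ∈ Icc a b, ∀ i, (A τ *ᵥ w τ) i < w' τ i) (ha : 0 ≤ w a) :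
    ∀ τ ∈ Icc a b, 0 ≤ w τ := by
  have hcont : ContinuousOn w (Icc a b) := fun τ hτ => (hw τ hτ).continuousWithinAt
  refine fun τ hτ => IsClosed.Icc_subset_of_forall_mem_nhdsWithin (s := {t | 0 ≤ w t}) ?_ ha ?_ hτ
  · rw [inter_comm]
    exact hcont.preimage_isClosed_of_isClosed isClosed_Icc isClosed_Ici
  rintro x ⟨hx0, hx⟩
  have hIcc : Icc a b ∈ 𝓝[>] x :=
    mem_of_superset (Ioo_mem_nhdsGT hx.2) (Ioo_subset_Icc_self.trans (Icc_subset_Icc_left hx.1))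
  have hxI : x ∈ Icc a b := Ico_subset_Icc_self hx
  suffices ∀ i, ∀ᶠ t in 𝓝[>] x, 0 ≤ w t i from (eventually_all.2 this).mono fun t ht => ht
  intro i
  rcases (hx0 i).lt_or_eq with hpos | hzero
  · have hwi : ContinuousWithinAt (fun t => w t i) (Icc a b) x :=
      (continuous_apply i).continuousAt.comp_continuousWithinAt (hcont x hxI)
    filter_upwards [(hwi.tendsto.mono_left (nhdsWithin_le_of_mem hIcc)).eventually
      (lt_mem_nhds hpos)] with t ht using ht.le
  · -- a vanishing coordinate has positive derivative, since the others are nonnegative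
    have hd : HasDerivWithinAt (fun t => w t i) (w' x i) (Ioi x) x :=
      (hasDerivWithinAt_pi.1 (hw x hxI) i).mono_of_mem_nhdsWithin hIcc
    have hd0 : 0 < w' x i := ((hA x hxI).mulVec_apply_nonneg hx0 hzero.symm).trans_lt (hlt x hxI i)
    filter_upwards [(hasDerivWithinAt_iff_tendsto_slope' (lt_irrefl x)).1 hd (Ioi_mem_nhds hd0),
      self_mem_nhdsWithin] with t ht htx
    have := (slope_pos_iff_of_le (f := fun t => w t i) (le_of_lt htx)).1 ht
    simp only [Pi.zero_apply] at hzero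
    linarith

theorem eventually_forall_add_mul_neg {X : Type*} [TopologicalSpace X] {K : Set X}
    (hK : IsCompact K) {ι : Type*} [Finite ι] {f g : X → ι → ℝ} (hf : ContinuousOn f K)
    (hg : ContinuousOn g K) (hneg : ∀ x ∈ K, ∀ i, f x i < 0) :
    ∀ᶠ ε in 𝓝 (0 : ℝ), ∀ x ∈ K, ∀ i, f x i + ε * g x i < 0 := by
  have : CompactSpace K := isCompact_iff_compactSpace.1 hK
  rw [continuousOn_iff_continuous_domRestrict] at hf hg
  have key := isCompact_univ.eventually_forall_of_forall_eventually (x₀ := (0 : ℝ))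
    (P := fun ε (x : K) => ∀ i, f x i + ε * g x i < 0) fun x _ => eventually_all.2 fun i =>
      (((continuous_apply i).comp (hf.comp continuous_snd)).add (continuous_fst.mul
        ((continuous_apply i).comp (hg.comp continuous_snd)))).continuousAt.eventually_lt
        continuousAt_const (by simpa using hneg x x.2 i)
  filter_upwards [key] with ε hε x hx using hε ⟨x, hx⟩ trivial

theorem eventually_forall_mulVec_add_smul_lt {X : Type*} [TopologicalSpace X] {K : Set X}
    (hK : IsCompact K) {m n : Type*} [Finite m] [Fintype n] {C : X → Matrix m n ℝ} {F : X → m → ℝ}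
    {y ψ : X → n → ℝ} {γ : ℝ} (hC : ContinuousOn C K) (hF : ContinuousOn F K)
    (hy : ContinuousOn y K) (hψ : ContinuousOn ψ K) (h : ∀ x ∈ K, ∀ i, (C x *ᵥ y x + F x) i < γ) :
    ∀ᶠ ε in 𝓝 (0 : ℝ), ∀ x ∈ K, ∀ i, (C x *ᵥ (y x + ε • ψ x) + F x) i < γ := by
  refine (eventually_forall_add_mul_neg hK (f := fun x => C x *ᵥ y x + F x - fun _ => γ)
    (g := fun x => C x *ᵥ ψ x) (by fun_prop) (by fun_prop) fun x hx i => sub_neg.2 (h x hx i)).mono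
    fun ε hε x hx i => ?_
  have := hε x hx i
  simp only [mulVec_add, mulVec_smul, Pi.add_apply, Pi.sub_apply, Pi.smul_apply, smul_eq_mul]
    at this ⊢
  linarith

theorem eventually_mulVec_add_smul_lt {m n : Type*} [Finite m] [Fintype n] {C : Matrix m n ℝ}
    {F : m → ℝ} {y : n → ℝ} (ψ : n → ℝ) {γ : ℝ} (h : ∀ i, (C *ᵥ y + F) i < γ) :
    ∀ᶠ ε in 𝓝 (0 : ℝ), ∀ i, (C *ᵥ (y + ε • ψ) + F) i < γ := by
  simpa using eventually_forall_mulVec_add_smul_lt (isCompact_singleton (x := ()))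
    (C := fun _ => C) (F := fun _ => F) (y := fun _ => y) (ψ := fun _ => ψ) continuousOn_const
    continuousOn_const continuousOn_const continuousOn_const fun _ _ => h

structure IsStateTransitionOn {n : ℕ} (A : ℝ → Matrix (Fin n) (Fin n) ℝ)
    (Φ : ℝ → ℝ → Matrix (Fin n) (Fin n) ℝ) (a b : ℝ) : Prop where
  apply_self : ∀ s ∈ Icc a b, Φ s s = 1
  hasDerivWithinAt_apply : ∀ s ∈ Icc a b, ∀ τ ∈ Icc s b, ∀ i j,
    HasDerivWithinAt (fun u => Φ u s i j) ((A τ * Φ τ s) i j) (Icc s b) τ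

noncomputable def mildSolution {n : ℕ} (Φ : ℝ → ℝ → Matrix (Fin n) (Fin n) ℝ)
    (c : ℝ → Fin n → ℝ) (a : ℝ) (v : Fin n → ℝ) (t : ℝ) : Fin n → ℝ :=
  Φ t a *ᵥ v + ∫ s in a..t, Φ t s *ᵥ c s

namespace IsStateTransitionOn

variable {n : ℕ} {A : ℝ → Matrix (Fin n) (Fin n) ℝ} {Φ : ℝ → ℝ → Matrix (Fin n) (Fin n) ℝ}
  {a b K : ℝ} {r s t t' τ : ℝ} {c : ℝ → Fin n → ℝ} {v : Fin n → ℝ}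

theorem hasDerivWithinAt_mulVec (hΦ : IsStateTransitionOn A Φ a b) (hs : s ∈ Icc a b)
    (v : Fin n → ℝ) (ht : t ∈ Icc s b) :
    HasDerivWithinAt (fun u => Φ u s *ᵥ v) (A t *ᵥ (Φ t s *ᵥ v)) (Icc s b) t := by
  rw [hasDerivWithinAt_pi]
  intro i
  rw [mulVec_mulVec]
  simp only [mulVec, dotProduct]
  exact .fun_sum fun j _ => (hΦ.hasDerivWithinAt_apply s hs t ht i j).mul_const (v j)

theorem continuousOn_mulVec (hΦ : IsStateTransitionOn A Φ a b) (hs : s ∈ Icc a b)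
    (v : Fin n → ℝ) : ContinuousOn (fun u => Φ u s *ᵥ v) (Icc s b) :=
  fun _ ht => (hΦ.hasDerivWithinAt_mulVec hs v ht).continuousWithinAt

theorem norm_mulVec_le (hΦ : IsStateTransitionOn A Φ a b) (hK0 : 0 ≤ K)
    (hK : ∀ τ ∈ Icc a b, ∀ x, ‖A τ *ᵥ x‖ ≤ K * ‖x‖) (hs : s ∈ Icc a b) (ht : t ∈ Icc s b)
    (v : Fin n → ℝ) : ‖Φ t s *ᵥ v‖ ≤ Real.exp (K * (b - a)) * ‖v‖ := by
  have := norm_le_gronwallBound_of_norm_deriv_right_le (δ := ‖v‖) (K := K) (ε := 0)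
    (hΦ.continuousOn_mulVec hs v)
    (fun u hu => (hΦ.hasDerivWithinAt_mulVec hs v (Ico_subset_Icc_self hu)).Ici_of_Icc hu)
    (by rw [hΦ.apply_self s hs, one_mulVec])
    (fun u hu => (add_zero (K * _)).symm ▸ hK u ⟨hs.1.trans hu.1, hu.2.le⟩ _) t ht
  rw [gronwallBound_ε0, mul_comm] at this
  refine this.trans (mul_le_mul_of_nonneg_right (Real.exp_le_exp.2 ?_) (norm_nonneg v))
  exact mul_le_mul_of_nonneg_left (by linarith [hs.1, ht.2]) hK0

theorem mulVec_mulVec_eq (hΦ : IsStateTransitionOn A Φ a b)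
    (hK : ∀ τ ∈ Icc a b, ∀ x, ‖A τ *ᵥ x‖ ≤ K * ‖x‖) (hs : s ∈ Icc a b) (hr : r ∈ Icc s b)
    (ht : t ∈ Icc r b) (v : Fin n → ℝ) : Φ t r *ᵥ (Φ r s *ᵥ v) = Φ t s *ᵥ v := by
  have hr' : r ∈ Icc a b := ⟨hs.1.trans hr.1, hr.2⟩
  have hlip (τ : ℝ) (hτ : τ ∈ Ico r b) :
      LipschitzOnWith K.toNNReal (fun x => A τ *ᵥ x) univ := by
    refine LipschitzOnWith.of_dist_le' fun x _ y _ => ?_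
    simpa [dist_eq_norm, ← mulVec_sub] using hK τ ⟨hr'.1.trans hτ.1, hτ.2.le⟩ (x - y)
  refine ODE_solution_unique_of_mem_Icc_right hlip (hΦ.continuousOn_mulVec hr' _)
    (fun τ hτ => (hΦ.hasDerivWithinAt_mulVec hr' _ (Ico_subset_Icc_self hτ)).Ici_of_Icc hτ)
    (fun _ _ => trivial) ((hΦ.continuousOn_mulVec hs v).mono (Icc_subset_Icc_left hr.1))
    (fun τ hτ => ((hΦ.hasDerivWithinAt_mulVec hs v ⟨hr.1.trans hτ.1, hτ.2.le⟩).mono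
      (Icc_subset_Icc_left hr.1)).Ici_of_Icc hτ)
    (fun _ _ => trivial) (by rw [hΦ.apply_self r hr', one_mulVec]) ht

theorem norm_mulVec_sub_self_le (hΦ : IsStateTransitionOn A Φ a b) (hK0 : 0 ≤ K)
    (hK : ∀ τ ∈ Icc a b, ∀ x, ‖A τ *ᵥ x‖ ≤ K * ‖x‖) (hs : s ∈ Icc a b) (ht : t ∈ Icc s b)
    (v : Fin n → ℝ) : ‖Φ t s *ᵥ v - v‖ ≤ K * Real.exp (K * (b - a)) * ‖v‖ * (t - s) := by
  have := (convex_Icc s b).norm_image_sub_le_of_norm_hasDerivWithin_le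
    (C := K * Real.exp (K * (b - a)) * ‖v‖)
    (fun u hu => hΦ.hasDerivWithinAt_mulVec hs v hu) (fun u hu => ?_)
    (left_mem_Icc.2 (ht.1.trans ht.2)) ht
  · rwa [hΦ.apply_self s hs, one_mulVec, Real.norm_of_nonneg (sub_nonneg.2 ht.1)] at this
  · calc ‖A u *ᵥ (Φ u s *ᵥ v)‖ ≤ K * ‖Φ u s *ᵥ v‖ := hK u ⟨hs.1.trans hu.1, hu.2⟩ _
      _ ≤ K * (Real.exp (K * (b - a)) * ‖v‖) :=
        mul_le_mul_of_nonneg_left (hΦ.norm_mulVec_le hK0 hK hs hu v) hK0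
      _ = _ := by ring

theorem continuousOn_initial (hΦ : IsStateTransitionOn A Φ a b) (hA : ContinuousOn A (Icc a b))
    (ht : t ∈ Icc a b) : ContinuousOn (fun s => Φ t s) (Icc a t) := by
  obtain ⟨K, hK0, hK⟩ := exists_norm_mulVec_le_of_continuousOn isCompact_Icc hA
  set M := Real.exp (K * (b - a))
  have hcol (v : Fin n → ℝ) : ContinuousOn (fun s => Φ t s *ᵥ v) (Icc a t) := by
    refine continuousOn_of_norm_sub_le_mul_sub (M * (K * M * ‖v‖)) fun s hs s' hs' hss' => ?_
    have hs'b : s' ∈ Icc a b := ⟨hs'.1, hs'.2.trans ht.2⟩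
    rw [← hΦ.mulVec_mulVec_eq hK ⟨hs.1, hs.2.trans ht.2⟩ ⟨hss', hs'b.2⟩ ⟨hs'.2, ht.2⟩, ← mulVec_sub]
    calc ‖Φ t s' *ᵥ (v - Φ s' s *ᵥ v)‖ ≤ M * ‖v - Φ s' s *ᵥ v‖ :=
          hΦ.norm_mulVec_le hK0 hK hs'b ⟨hs'.2, ht.2⟩ _
      _ ≤ M * (K * M * ‖v‖ * (s' - s)) := by
          rw [norm_sub_rev]
          gcongr
          exact hΦ.norm_mulVec_sub_self_le hK0 hK ⟨hs.1, hs.2.trans ht.2⟩ ⟨hss', hs'b.2⟩ v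
      _ = _ := by ring
  refine continuousOn_pi.2 fun i => continuousOn_pi.2 fun j => ?_
  simpa [mulVec_single_one, Function.comp_def] using
    (continuous_apply i).comp_continuousOn (hcol (Pi.single j 1))

theorem intervalIntegrable_mulVec (hΦ : IsStateTransitionOn A Φ a b)
    (hA : ContinuousOn A (Icc a b)) (hc : ContinuousOn c (Icc a b)) (ht : t ∈ Icc a b) {r r' : ℝ}
    (hr : uIcc r r' ⊆ Icc a t) : IntervalIntegrable (fun s => Φ t s *ᵥ c s) volume r r' :=
  (((hΦ.continuousOn_initial hA ht).matrix_mulVec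
    (hc.mono (Icc_subset_Icc_right ht.2))).mono hr).intervalIntegrable

theorem mildSolution_self (hΦ : IsStateTransitionOn A Φ a b) (hab : a ≤ b) :
    mildSolution Φ c a v a = v := by
  simp [mildSolution, hΦ.apply_self a ⟨le_rfl, hab⟩]

theorem mildSolution_eq_mulVec_add (hΦ : IsStateTransitionOn A Φ a b)
    (hA : ContinuousOn A (Icc a b)) (hc : ContinuousOn c (Icc a b)) (ht : t ∈ Icc a b)
    (ht' : t' ∈ Icc t b) :
    mildSolution Φ c a v t' = Φ t' t *ᵥ mildSolution Φ c a v t + ∫ s in t..t', Φ t' s *ᵥ c s := by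
  obtain ⟨K, -, hK⟩ := exists_norm_mulVec_le_of_continuousOn isCompact_Icc hA
  have ht'0 : t' ∈ Icc a b := ⟨ht.1.trans ht'.1, ht'.2⟩
  have hpull : ∫ s in a..t, Φ t' s *ᵥ c s = Φ t' t *ᵥ ∫ s in a..t, Φ t s *ᵥ c s := by
    have := (mulVecLin (Φ t' t)).toContinuousLinearMap.intervalIntegral_comp_comm
      (hΦ.intervalIntegrable_mulVec hA hc ht (uIcc_of_le ht.1).subset)
    simp only [LinearMap.coe_toContinuousLinearMap', mulVecLin_apply] at this
    rw [← this]
    refine integral_congr fun s hs => ?_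
    rw [uIcc_of_le ht.1] at hs
    simpa using (hΦ.mulVec_mulVec_eq hK ⟨hs.1, hs.2.trans ht.2⟩ ⟨hs.2, ht.2⟩ ht' (c s)).symm
  rw [mildSolution, mildSolution, ← integral_add_adjacent_intervals
    (hΦ.intervalIntegrable_mulVec hA hc ht'0 ((uIcc_of_le ht.1).trans_subset
      (Icc_subset_Icc_right ht'.1)))
    (hΦ.intervalIntegrable_mulVec hA hc ht'0 ((uIcc_of_le ht'.1).trans_subset
      (Icc_subset_Icc_left ht.1))), hpull, mulVec_add,
    hΦ.mulVec_mulVec_eq hK ⟨le_rfl, ht.1.trans ht.2⟩ ht ht', add_assoc]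

theorem norm_integral_mulVec_le (hΦ : IsStateTransitionOn A Φ a b) (hK0 : 0 ≤ K)
    (hK : ∀ τ ∈ Icc a b, ∀ x, ‖A τ *ᵥ x‖ ≤ K * ‖x‖) {C : ℝ} (hC : ∀ s ∈ Icc a b, ‖c s‖ ≤ C)
    (ht : t ∈ Icc a b) (ht' : t' ∈ Icc t b) :
    ‖∫ s in t..t', Φ t' s *ᵥ c s‖ ≤ Real.exp (K * (b - a)) * C * (t' - t) := by
  have := norm_integral_le_of_norm_le_const (a := t) (b := t') (f := fun s => Φ t' s *ᵥ c s)
    (C := Real.exp (K * (b - a)) * C) fun s hs => ?_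
  · rwa [abs_of_nonneg (sub_nonneg.2 ht'.1)] at this
  rw [uIoc_of_le ht'.1] at hs
  have hs0 : s ∈ Icc a b := ⟨ht.1.trans hs.1.le, hs.2.trans ht'.2⟩
  exact (hΦ.norm_mulVec_le hK0 hK hs0 ⟨hs.2, ht'.2⟩ _).trans
    (mul_le_mul_of_nonneg_left (hC s hs0) (Real.exp_pos _).le)

theorem norm_integral_mulVec_sub_le (hΦ : IsStateTransitionOn A Φ a b) (hK0 : 0 ≤ K)
    (hK : ∀ τ ∈ Icc a b, ∀ x, ‖A τ *ᵥ x‖ ≤ K * ‖x‖) {C : ℝ} (hC : ∀ s ∈ Icc a b, ‖c s‖ ≤ C)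
    (ht : t ∈ Icc a b) (ht' : t' ∈ Icc t b) :
    ‖∫ s in t..t', (Φ t' s *ᵥ c s - c s)‖ ≤ K * Real.exp (K * (b - a)) * C * (t' - t) ^ 2 := by
  set M := Real.exp (K * (b - a))
  have := norm_integral_le_of_norm_le_const (a := t) (b := t')
    (f := fun s => Φ t' s *ᵥ c s - c s) (C := K * M * C * (t' - t)) fun s hs => ?_
  · rw [abs_of_nonneg (sub_nonneg.2 ht'.1)] at this
    linarith
  rw [uIoc_of_le ht'.1] at hs
  have hs0 : s ∈ Icc a b := ⟨ht.1.trans hs.1.le, hs.2.trans ht'.2⟩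
  have hKM : 0 ≤ K * M := mul_nonneg hK0 (Real.exp_pos _).le
  calc ‖Φ t' s *ᵥ c s - c s‖ ≤ K * M * ‖c s‖ * (t' - s) :=
        hΦ.norm_mulVec_sub_self_le hK0 hK hs0 ⟨hs.2, ht'.2⟩ _
    _ ≤ K * M * C * (t' - t) :=
        mul_le_mul (mul_le_mul_of_nonneg_left (hC s hs0) hKM) (by linarith [hs.1])
          (sub_nonneg.2 hs.2) (mul_nonneg hKM ((norm_nonneg _).trans (hC s hs0)))

theorem continuousOn_mildSolution (hΦ : IsStateTransitionOn A Φ a b)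
    (hA : ContinuousOn A (Icc a b)) (hc : ContinuousOn c (Icc a b)) :
    ContinuousOn (mildSolution Φ c a v) (Icc a b) := by
  obtain ⟨K, hK0, hK⟩ := exists_norm_mulVec_le_of_continuousOn isCompact_Icc hA
  obtain ⟨C, hC⟩ := isCompact_Icc.exists_bound_of_continuousOn hc
  set M := Real.exp (K * (b - a))
  set y := mildSolution Φ c a v
  have hB (t : ℝ) (ht : t ∈ Icc a b) : ‖y t‖ ≤ M * ‖v‖ + M * C * (b - a) := by
    have hC0 : 0 ≤ C := (norm_nonneg _).trans (hC t ht)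
    calc ‖y t‖ ≤ ‖Φ t a *ᵥ v‖ + ‖∫ s in a..t, Φ t s *ᵥ c s‖ := norm_add_le _ _
      _ ≤ M * ‖v‖ + M * C * (t - a) :=
          add_le_add (hΦ.norm_mulVec_le hK0 hK ⟨le_rfl, ht.1.trans ht.2⟩ ht v)
            (hΦ.norm_integral_mulVec_le hK0 hK hC ⟨le_rfl, ht.1.trans ht.2⟩ ht)
      _ ≤ M * ‖v‖ + M * C * (b - a) := by gcongr; exact ht.2
  refine continuousOn_of_norm_sub_le_mul_sub (K * M * (M * ‖v‖ + M * C * (b - a)) + M * C)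
    fun t ht t' ht' htt' => ?_
  rw [show y t' = _ from hΦ.mildSolution_eq_mulVec_add hA hc ht ⟨htt', ht'.2⟩, add_sub_right_comm]
  calc ‖Φ t' t *ᵥ y t - y t + ∫ s in t..t', Φ t' s *ᵥ c s‖
      ≤ ‖Φ t' t *ᵥ y t - y t‖ + ‖∫ s in t..t', Φ t' s *ᵥ c s‖ := norm_add_le _ _
    _ ≤ K * M * ‖y t‖ * (t' - t) + M * C * (t' - t) :=
        add_le_add (hΦ.norm_mulVec_sub_self_le hK0 hK ht ⟨htt', ht'.2⟩ _)
          (hΦ.norm_integral_mulVec_le hK0 hK hC ht ⟨htt', ht'.2⟩)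
    _ ≤ K * M * (M * ‖v‖ + M * C * (b - a)) * (t' - t) + M * C * (t' - t) := by
        gcongr
        exact hB t ht
    _ = _ := by ring

theorem hasDerivWithinAt_Ici_mildSolution (hΦ : IsStateTransitionOn A Φ a b)
    (hA : ContinuousOn A (Icc a b)) (hc : ContinuousOn c (Icc a b)) (ht : t ∈ Ico a b) :
    HasDerivWithinAt (mildSolution Φ c a v) (A t *ᵥ mildSolution Φ c a v t + c t) (Ici t) t := by
  obtain ⟨K, hK0, hK⟩ := exists_norm_mulVec_le_of_continuousOn isCompact_Icc hA
  obtain ⟨C, hC⟩ := isCompact_Icc.exists_bound_of_continuousOn hc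
  set y := mildSolution Φ c a v
  have ht0 : t ∈ Icc a b := Ico_subset_Icc_self ht
  have hGE : Icc t b ∈ 𝓝[≥] t := Icc_mem_nhdsGE ht.2
  have hGT : Icc a b ∈ 𝓝[>] t :=
    mem_of_superset (Ioo_mem_nhdsGT ht.2) (Ioo_subset_Icc_self.trans (Icc_subset_Icc_left ht.1))
  have hint (t' : ℝ) (ht' : t' ∈ Icc t b) :
      IntervalIntegrable (fun s => Φ t' s *ᵥ c s) volume t t' :=
    hΦ.intervalIntegrable_mulVec hA hc ⟨ht.1.trans ht'.1, ht'.2⟩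
      ((uIcc_of_le ht'.1).trans_subset (Icc_subset_Icc_left ht.1))
  have hcint (t' : ℝ) (ht' : t' ∈ Icc t b) : IntervalIntegrable c volume t t' :=
    (hc.mono ((uIcc_of_le ht'.1).trans_subset (Icc_subset_Icc ht.1 ht'.2))).intervalIntegrable
  -- on `[t, b]`, `y = Φ(·, t) y(t) + ∫ₜ c + ∫ₜ (Φ(·, s) - 1) c`, whose last term is `O((· - t)²)`
  have hflow : HasDerivWithinAt (fun t' => Φ t' t *ᵥ y t) (A t *ᵥ y t) (Ici t) t := by
    simpa [hΦ.apply_self t ht0] using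
      (hΦ.hasDerivWithinAt_mulVec ht0 (y t) (left_mem_Icc.2 ht.2.le)).Ici_of_Icc
        (left_mem_Ico.2 ht.2)
  have hforce : HasDerivWithinAt (fun t' => ∫ s in t..t', c s) (c t) (Ici t) t :=
    integral_hasDerivWithinAt_right .refl
      ((hc.stronglyMeasurableAtFilter_nhdsWithin measurableSet_Icc t).filter_mono
        (nhdsWithin_le_of_mem hGT))
      ((hc t ht0).mono_of_mem_nhdsWithin hGT)
  have hrest : HasDerivWithinAt (fun t' => ∫ s in t..t', (Φ t' s *ᵥ c s - c s)) 0 (Ici t) t :=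
    hasDerivWithinAt_zero_of_norm_le_sq (by simp) <| mem_of_superset hGE fun t' ht' =>
      hΦ.norm_integral_mulVec_sub_le hK0 hK hC ht0 ht'
  have hy : y =ᶠ[𝓝[≥] t] fun t' =>
      Φ t' t *ᵥ y t + (∫ s in t..t', c s) + ∫ s in t..t', (Φ t' s *ᵥ c s - c s) := by
    filter_upwards [hGE] with t' ht'
    rw [show y t' = _ from hΦ.mildSolution_eq_mulVec_add hA hc ht0 ht', integral_sub (hint t' ht')
      (hcint t' ht')]
    abel
  simpa using ((hflow.add hforce).add hrest).congr_of_eventuallyEq hy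
    (by simp [hΦ.apply_self t ht0])

theorem hasDerivWithinAt_mildSolution (hΦ : IsStateTransitionOn A Φ a b)
    (hA : ContinuousOn A (Icc a b)) (hc : ContinuousOn c (Icc a b)) (hτ : τ ∈ Icc a b) :
    HasDerivWithinAt (mildSolution Φ c a v) (A τ *ᵥ mildSolution Φ c a v τ + c τ) (Icc a b) τ :=
  hasDerivWithinAt_Icc_of_forall_hasDerivWithinAt_Ici (hΦ.continuousOn_mildSolution hA hc)
    ((hA.matrix_mulVec (hΦ.continuousOn_mildSolution hA hc)).add hc)
    (fun _ ht => hΦ.hasDerivWithinAt_Ici_mildSolution hA hc ht) hτ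

theorem mildSolution_le_of_lt_deriv (hΦ : IsStateTransitionOn A Φ a b)
    (hA : ContinuousOn A (Icc a b)) (hc : ContinuousOn c (Icc a b))
    (hAM : ∀ τ ∈ Icc a b, Metzler (A τ)) {ζ ζ' : ℝ → Fin n → ℝ}
    (hζ : ∀ τ ∈ Icc a b, HasDerivWithinAt ζ (ζ' τ) (Icc a b) τ)
    (hζ' : ∀ τ ∈ Icc a b, ∀ i, (-ζ' τ + A τ *ᵥ ζ τ + c τ) i < 0) (hτ : τ ∈ Icc a b) :
    mildSolution Φ c a (ζ a) τ ≤ ζ τ := by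
  refine sub_nonneg.1 <| Metzler.nonneg_of_mulVec_lt_deriv hAM
    (fun τ hτ => (hζ τ hτ).sub (hΦ.hasDerivWithinAt_mildSolution hA hc hτ)) (fun τ hτ i => ?_)
    (by simp [hΦ.mildSolution_self (hτ.1.trans hτ.2)]) τ hτ
  have := hζ' τ hτ i
  simp only [Pi.sub_apply, mulVec_sub, Pi.add_apply, Pi.neg_apply] at this ⊢
  linarith

end IsStateTransitionOn

theorem constant_dwell_time_Linf_iff_general {n pc qc qd pd : ℕ} (Tb γ : ℝ) (hTb : 0 < Tb)
    (At : ℝ → Matrix (Fin n) (Fin n) ℝ) (Ec : ℝ → Matrix (Fin n) (Fin pc) ℝ)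
    (Cc : ℝ → Matrix (Fin qc) (Fin n) ℝ) (Fc : ℝ → Matrix (Fin qc) (Fin pc) ℝ)
    (J : Matrix (Fin n) (Fin n) ℝ) (Ed : Matrix (Fin n) (Fin pd) ℝ)
    (Cd : Matrix (Fin qd) (Fin n) ℝ) (Fd : Matrix (Fin qd) (Fin pd) ℝ)
    (hA : ContinuousOn At (Set.Icc 0 Tb)) (hEc : ContinuousOn Ec (Set.Icc 0 Tb))
    (hCc : ContinuousOn Cc (Set.Icc 0 Tb)) (hFc : ContinuousOn Fc (Set.Icc 0 Tb))
    (hAM : ∀ τ ∈ Set.Icc (0 : ℝ) Tb, Metzler (At τ))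
    (hCcp : ∀ τ ∈ Set.Icc (0 : ℝ) Tb, ∀ i j, 0 ≤ Cc τ i j)
    (hJp : ∀ i j, 0 ≤ J i j)
    (hCdp : ∀ i j, 0 ≤ Cd i j)
    -- `Φ` is the state-transition matrix of `A` on `[0, T̄]`
    (Φ : ℝ → ℝ → Matrix (Fin n) (Fin n) ℝ)
    (hΦ0 : ∀ s ∈ Set.Icc (0 : ℝ) Tb, Φ s s = 1)
    (hΦ : ∀ s ∈ Set.Icc (0 : ℝ) Tb, ∀ τ ∈ Set.Icc s Tb, ∀ i j,
      HasDerivWithinAt (fun u => Φ u s i j) ((At τ * Φ τ s) i j) (Set.Icc s Tb) τ) :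
    (∃ lam : Fin n → ℝ, (∀ i, 0 < lam i) ∧
      (∀ i, (J *ᵥ (Φ Tb 0 *ᵥ lam) - lam +
        J *ᵥ (∫ s in (0:ℝ)..Tb, Φ Tb s *ᵥ (Ec s *ᵥ fun _ => (1:ℝ))) +
        Ed *ᵥ (fun _ => (1:ℝ))) i < 0) ∧
      (∀ τ ∈ Set.Icc (0 : ℝ) Tb, ∀ i,
        (Cc τ *ᵥ (Φ τ 0 *ᵥ lam + ∫ s in (0:ℝ)..τ, Φ τ s *ᵥ (Ec s *ᵥ fun _ => (1:ℝ))) +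
          Fc τ *ᵥ (fun _ => (1:ℝ))) i < γ) ∧
      (∀ i, (Cd *ᵥ (Φ Tb 0 *ᵥ lam + ∫ s in (0:ℝ)..Tb, Φ Tb s *ᵥ (Ec s *ᵥ fun _ => (1:ℝ))) +
        Fd *ᵥ (fun _ => (1:ℝ))) i < γ))
    ↔
    (∃ ζ ζ' : ℝ → Fin n → ℝ,
      (∀ τ ∈ Set.Icc (0 : ℝ) Tb, HasDerivWithinAt ζ (ζ' τ) (Set.Icc 0 Tb) τ) ∧
      ContinuousOn ζ' (Set.Icc 0 Tb) ∧
      (∀ i, 0 < ζ 0 i) ∧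
      (∀ τ ∈ Set.Icc (0 : ℝ) Tb, ∀ i,
        (-(ζ' τ) + At τ *ᵥ ζ τ + Ec τ *ᵥ (fun _ => (1:ℝ))) i < 0) ∧
      (∀ τ ∈ Set.Icc (0 : ℝ) Tb, ∀ i,
        (Cc τ *ᵥ ζ τ + Fc τ *ᵥ (fun _ => (1:ℝ))) i - γ < 0) ∧
      (∀ i, (J *ᵥ ζ Tb - ζ 0 + Ed *ᵥ (fun _ => (1:ℝ))) i < 0) ∧
      (∀ i, (Cd *ᵥ ζ Tb + Fd *ᵥ (fun _ => (1:ℝ))) i - γ < 0)) := by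
  have hST : IsStateTransitionOn At Φ 0 Tb := ⟨hΦ0, hΦ⟩
  have hT : Tb ∈ Icc (0 : ℝ) Tb := right_mem_Icc.2 hTb.le
  have hc : ContinuousOn (fun s => Ec s *ᵥ fun _ => (1 : ℝ)) (Icc 0 Tb) :=
    hEc.matrix_mulVec continuousOn_const
  constructor
  · rintro ⟨lam, hlam, hjump, hflow, hout⟩
    set y := mildSolution Φ (fun s => Ec s *ᵥ fun _ => (1 : ℝ)) 0 lam
    set ψ := mildSolution Φ (fun _ _ => (1 : ℝ)) 0 0
    have hyc : ContinuousOn y (Icc 0 Tb) := hST.continuousOn_mildSolution hA hc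
    have hψc : ContinuousOn ψ (Icc 0 Tb) := hST.continuousOn_mildSolution hA continuousOn_const
    have hy0 : y 0 = lam := hST.mildSolution_self hTb.le
    have hψ0 : ψ 0 = 0 := hST.mildSolution_self hTb.le
    have hjump' (i : Fin n) : (J *ᵥ y Tb + ((Ed *ᵥ fun _ => 1) - lam)) i < 0 := by
      have := hjump i
      simp only [y, mildSolution, mulVec_add, Pi.add_apply, Pi.sub_apply] at this ⊢
      linarith
    obtain ⟨ε, ⟨⟨hflowε, hjumpε⟩, houtε⟩, hε⟩ := (((((eventually_forall_mulVec_add_smul_lt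
      isCompact_Icc hCc (hFc.matrix_mulVec continuousOn_const) hyc hψc hflow).and
      (eventually_mulVec_add_smul_lt (ψ Tb) hjump')).and
      (eventually_mulVec_add_smul_lt (ψ Tb) hout)).filter_mono nhdsWithin_le_nhds).and
      (self_mem_nhdsWithin (s := Ioi 0))).exists
    refine ⟨fun τ => y τ + ε • ψ τ,
      fun τ => At τ *ᵥ (y τ + ε • ψ τ) + ((Ec τ *ᵥ fun _ => 1) + ε • fun _ => 1), fun τ hτ => ?_,
      by fun_prop, fun i => by simpa [hy0, hψ0] using hlam i, fun τ hτ i => by simpa using hε,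
      fun τ hτ i => sub_neg.2 (hflowε τ hτ i), fun i => ?_, fun i => sub_neg.2 (houtε i)⟩
    · refine ((hST.hasDerivWithinAt_mildSolution hA hc hτ).add
        ((hST.hasDerivWithinAt_mildSolution hA continuousOn_const hτ).const_smul ε)).congr_deriv ?_
      simp only [mulVec_add, mulVec_smul, smul_add]
      abel
    · have := hjumpε i
      simp only [hy0, hψ0, smul_zero, add_zero, Pi.add_apply, Pi.sub_apply] at this ⊢
      linarith
  · rintro ⟨ζ, ζ', hζ, -, hζ0, hflow, hout, hjump, hjumpout⟩
    have hle (τ : ℝ) (hτ : τ ∈ Icc 0 Tb) := hST.mildSolution_le_of_lt_deriv hA hc hAM hζ hflow hτ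
    refine ⟨ζ 0, hζ0, fun i => ?_, fun τ hτ i => ?_, fun i => ?_⟩
    · have := mulVec_le_mulVec_of_nonneg hJp (hle Tb hT) i
      have := hjump i
      simp only [mildSolution, mulVec_add, Pi.add_apply, Pi.sub_apply] at *
      linarith
    · exact (add_le_add (mulVec_le_mulVec_of_nonneg (hCcp τ hτ) (hle τ hτ) i) le_rfl).trans_lt
        (sub_neg.1 (hout τ hτ i))
    · exact (add_le_add (mulVec_le_mulVec_of_nonneg hCdp (hle Tb hT) i) le_rfl).trans_lt
        (sub_neg.1 (hjumpout i))

/-- Equivalence between the discrete-time (state-transition matrix) conditions and the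
differential (clock-dependent) conditions for stability and hybrid `L∞×ℓ∞` performance
level `γ` under constant dwell-time `T̄`. -/
theorem constant_dwell_time_Linf_iff {n pc qc qd pd : ℕ} (Tb γ : ℝ) (hTb : 0 < Tb) (hγ : 0 < γ)
    (At : ℝ → Matrix (Fin n) (Fin n) ℝ) (Ec : ℝ → Matrix (Fin n) (Fin pc) ℝ)
    (Cc : ℝ → Matrix (Fin qc) (Fin n) ℝ) (Fc : ℝ → Matrix (Fin qc) (Fin pc) ℝ)
    (J : Matrix (Fin n) (Fin n) ℝ) (Ed : Matrix (Fin n) (Fin pd) ℝ)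
    (Cd : Matrix (Fin qd) (Fin n) ℝ) (Fd : Matrix (Fin qd) (Fin pd) ℝ)
    (hA : ContinuousOn At (Set.Icc 0 Tb)) (hEc : ContinuousOn Ec (Set.Icc 0 Tb))
    (hCc : ContinuousOn Cc (Set.Icc 0 Tb)) (hFc : ContinuousOn Fc (Set.Icc 0 Tb))
    (hAM : ∀ τ ∈ Set.Icc (0 : ℝ) Tb, Metzler (At τ))
    (hEcp : ∀ τ ∈ Set.Icc (0 : ℝ) Tb, ∀ i j, 0 ≤ Ec τ i j)
    (hCcp : ∀ τ ∈ Set.Icc (0 : ℝ) Tb, ∀ i j, 0 ≤ Cc τ i j)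
    (hFcp : ∀ τ ∈ Set.Icc (0 : ℝ) Tb, ∀ i j, 0 ≤ Fc τ i j)
    (hJp : ∀ i j, 0 ≤ J i j) (hEdp : ∀ i j, 0 ≤ Ed i j)
    (hCdp : ∀ i j, 0 ≤ Cd i j) (hFdp : ∀ i j, 0 ≤ Fd i j)
    -- `Φ` is the state-transition matrix of `A` on `[0, T̄]`
    (Φ : ℝ → ℝ → Matrix (Fin n) (Fin n) ℝ)
    (hΦ0 : ∀ s ∈ Set.Icc (0 : ℝ) Tb, Φ s s = 1)
    (hΦ : ∀ s ∈ Set.Icc (0 : ℝ) Tb, ∀ τ ∈ Set.Icc s Tb, ∀ i j,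
      HasDerivWithinAt (fun u => Φ u s i j) ((At τ * Φ τ s) i j) (Set.Icc s Tb) τ) :
    (∃ lam : Fin n → ℝ, (∀ i, 0 < lam i) ∧
      (∀ i, (J *ᵥ (Φ Tb 0 *ᵥ lam) - lam +
        J *ᵥ (∫ s in (0:ℝ)..Tb, Φ Tb s *ᵥ (Ec s *ᵥ fun _ => (1:ℝ))) +
        Ed *ᵥ (fun _ => (1:ℝ))) i < 0) ∧
      (∀ τ ∈ Set.Icc (0 : ℝ) Tb, ∀ i,
        (Cc τ *ᵥ (Φ τ 0 *ᵥ lam + ∫ s in (0:ℝ)..τ, Φ τ s *ᵥ (Ec s *ᵥ fun _ => (1:ℝ))) +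
          Fc τ *ᵥ (fun _ => (1:ℝ))) i < γ) ∧
      (∀ i, (Cd *ᵥ (Φ Tb 0 *ᵥ lam + ∫ s in (0:ℝ)..Tb, Φ Tb s *ᵥ (Ec s *ᵥ fun _ => (1:ℝ))) +
        Fd *ᵥ (fun _ => (1:ℝ))) i < γ))
    ↔
    (∃ ζ ζ' : ℝ → Fin n → ℝ,
      (∀ τ ∈ Set.Icc (0 : ℝ) Tb, HasDerivWithinAt ζ (ζ' τ) (Set.Icc 0 Tb) τ) ∧
      ContinuousOn ζ' (Set.Icc 0 Tb) ∧
      (∀ i, 0 < ζ 0 i) ∧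
      (∀ τ ∈ Set.Icc (0 : ℝ) Tb, ∀ i,
        (-(ζ' τ) + At τ *ᵥ ζ τ + Ec τ *ᵥ (fun _ => (1:ℝ))) i < 0) ∧
      (∀ τ ∈ Set.Icc (0 : ℝ) Tb, ∀ i,
        (Cc τ *ᵥ ζ τ + Fc τ *ᵥ (fun _ => (1:ℝ))) i - γ < 0) ∧
      (∀ i, (J *ᵥ ζ Tb - ζ 0 + Ed *ᵥ (fun _ => (1:ℝ))) i < 0) ∧
      (∀ i, (Cd *ᵥ ζ Tb + Fd *ᵥ (fun _ => (1:ℝ))) i - γ < 0)) :=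
  constant_dwell_time_Linf_iff_general Tb γ hTb At Ec Cc Fc J Ed Cd Fd hA hEc hCc hFc hAM hCcp hJp
    hCdp Φ hΦ0 hΦ
end
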